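/- arXiv:2312.05670 — 4 statements merged into one kernel-verified Lean document; each statement's English description precedes it below -/
import Mathlib

section
/- Let W be a subset of a normed space and suppose ε_n(W) ≤ B·n^(−r)·(log(n+1))^b for all n ≥ 1, where r ∈ (0, 1/2), b ≥ 0, B > 0, and ε_0(W) ≤ M. Then there is a constant c depending only on B, M, r, b such that for all m ≥ 2: Σ_{k=0}^{⌊log₂ m⌋} 2^(k/2) · ε_{2^k}(W) ≤ c · (log(m+1))^b · m^((1−2r)/2). -/
open Real

/-- The `n`-th entropy number of a set `W` in a (semi)normed space:
the infimum of `ε > 0` such that `W` can be covered by `2^n` balls of radius `ε`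
with centers in `W`. -/
noncomputable def entropyNum {X : Type*} [SeminormedAddCommGroup X] (W : Set X) (n : ℕ) : ℝ :=
  sInf {ε : ℝ | 0 < ε ∧ ∃ T : Finset X, ↑T ⊆ W ∧ T.card ≤ 2 ^ n ∧
    ∀ x ∈ W, ∃ y ∈ T, ‖x - y‖ ≤ ε}

theorem stmt_2 {X : Type*} [SeminormedAddCommGroup X]
    (B M r b : ℝ) (hB : 0 < B) (hM : 0 < M) (hr : r ∈ Set.Ioo (0 : ℝ) (1/2)) (hb : 0 ≤ b) :
    ∃ c : ℝ, 0 < c ∧ ∀ W : Set X,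
      entropyNum W 0 ≤ M →
      (∀ n : ℕ, 1 ≤ n → entropyNum W n ≤ B * (n : ℝ) ^ (-r) * (Real.logb 2 (n + 1)) ^ b) →
      ∀ m : ℕ, 2 ≤ m →
        ∑ k ∈ Finset.range (Nat.log 2 m + 1), (2 : ℝ) ^ ((k : ℝ) / 2) * entropyNum W (2 ^ k)
          ≤ c * (Real.logb 2 (m + 1)) ^ b * (m : ℝ) ^ ((1 - 2 * r) / 2) := by
  obtain ⟨hr0, hr2⟩ := hr
  set s : ℝ := (1 - 2 * r) / 2 with hs_def
  have hs : 0 < s := by rw [hs_def]; linarith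
  set q : ℝ := (2 : ℝ) ^ s with hq_def
  have hq1 : 1 < q := by
    rw [hq_def]
    exact (Real.one_lt_rpow_iff_of_pos (by norm_num)).mpr (Or.inl ⟨by norm_num, hs⟩)
  have hq0 : 0 < q - 1 := by linarith
  refine ⟨B * q / (q - 1), by positivity, ?_⟩
  intro W _ hW m hm
  set K := Nat.log 2 m with hK
  have h2K : (2 : ℝ) ^ K ≤ m := by
    exact_mod_cast Nat.pow_log_le_self 2 (by omega : m ≠ 0)
  have hm1 : (1 : ℝ) ≤ m := by exact_mod_cast Nat.one_le_of_lt hm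
  set L : ℝ := Real.logb 2 (m + 1) with hL
  have hL0 : 0 ≤ L := Real.logb_nonneg (by norm_num) (by linarith)
  have hqK : q ^ K ≤ (m : ℝ) ^ s := by
    have h1 : q ^ K = ((2 : ℝ) ^ (K : ℕ)) ^ s := by
      rw [hq_def, ← Real.rpow_natCast ((2:ℝ) ^ s) K, ← Real.rpow_natCast 2 K,
        ← Real.rpow_mul (by norm_num), ← Real.rpow_mul (by norm_num), mul_comm]
    rw [h1]
    exact Real.rpow_le_rpow (by positivity) h2K hs.le
  have hterm : ∀ k ∈ Finset.range (K + 1),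
      (2 : ℝ) ^ ((k : ℝ) / 2) * entropyNum W (2 ^ k) ≤ B * L ^ b * q ^ k := by
    intro k hk
    have hkK : k ≤ K := Nat.lt_succ_iff.mp (Finset.mem_range.mp hk)
    have h2k : ((2 ^ k : ℕ) : ℝ) ≤ m := by
      have : (2:ℕ) ^ k ≤ 2 ^ K := Nat.pow_le_pow_right (by norm_num) hkK
      push_cast
      calc (2:ℝ) ^ k ≤ (2:ℝ) ^ K := by exact_mod_cast this
        _ ≤ m := h2K
    have hE := hW (2 ^ k) Nat.one_le_two_pow
    have hLk : Real.logb 2 (((2 ^ k : ℕ) : ℝ) + 1) ^ b ≤ L ^ b := by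
      apply Real.rpow_le_rpow _ _ hb
      · exact Real.logb_nonneg (by norm_num) (le_add_of_nonneg_left (by positivity))
      · exact Real.logb_le_logb_of_le (by norm_num) (by positivity) (by linarith)
    calc (2 : ℝ) ^ ((k : ℝ) / 2) * entropyNum W (2 ^ k)
        ≤ (2 : ℝ) ^ ((k : ℝ) / 2) *
            (B * ((2 ^ k : ℕ) : ℝ) ^ (-r) * Real.logb 2 (((2 ^ k : ℕ) : ℝ) + 1) ^ b) := by
          exact mul_le_mul_of_nonneg_left hE (by positivity)
      _ ≤ (2 : ℝ) ^ ((k : ℝ) / 2) * (B * ((2 ^ k : ℕ) : ℝ) ^ (-r) * L ^ b) := by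
          apply mul_le_mul_of_nonneg_left _ (by positivity)
          exact mul_le_mul_of_nonneg_left hLk (by positivity)
      _ = B * L ^ b * ((2 : ℝ) ^ ((k : ℝ) / 2) * (2 : ℝ) ^ ((k : ℝ) * (-r))) := by
          have : ((2 ^ k : ℕ) : ℝ) ^ (-r) = (2 : ℝ) ^ ((k : ℝ) * (-r)) := by
            push_cast
            rw [← Real.rpow_natCast 2 k, ← Real.rpow_mul (by norm_num)]
          rw [this]; ring
      _ = B * L ^ b * q ^ k := by
          rw [← Real.rpow_add (by norm_num : (0:ℝ) < 2), hq_def,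
            ← Real.rpow_natCast ((2:ℝ) ^ s) k, ← Real.rpow_mul (by norm_num)]
          congr 1
          rw [hs_def]; ring
  calc ∑ k ∈ Finset.range (K + 1), (2 : ℝ) ^ ((k : ℝ) / 2) * entropyNum W (2 ^ k)
      ≤ ∑ k ∈ Finset.range (K + 1), B * L ^ b * q ^ k := Finset.sum_le_sum hterm
    _ = B * L ^ b * ((q ^ (K + 1) - 1) / (q - 1)) := by
        rw [← Finset.mul_sum, geom_sum_eq (ne_of_gt hq1)]
    _ ≤ B * L ^ b * (q * (m : ℝ) ^ s / (q - 1)) := by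
        apply mul_le_mul_of_nonneg_left _ (by positivity)
        apply (div_le_div_iff_of_pos_right hq0).mpr
        nlinarith [pow_succ q K, pow_pos (by linarith : (0:ℝ) < q) K]
    _ = B * q / (q - 1) * L ^ b * (m : ℝ) ^ s := by ring
end

section
/- Let W be a subset of a normed space with ε_n(W) ≤ B·n^(−1/2)·(log(n+1))^b for all n ≥ 1, where b ≥ 0, B > 0, and ε_0(W) ≤ M. Then there is a constant c depending only on B, M, b such that for all m ≥ 2: Σ_{k=0}^{⌊log₂ m⌋} 2^(k/2) · ε_{2^k}(W) ≤ c · (log(m+1))^(b+1). -/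
open Real

lemma term_bound_aux {X : Type*} [SeminormedAddCommGroup X] (W : Set X) {B b : ℝ}
    (hB : 0 < B) (hb : 0 ≤ b)
    (hW : ∀ n : ℕ, 1 ≤ n → entropyNum W n ≤ B * (n : ℝ) ^ (-(1:ℝ)/2) * (Real.logb 2 (n + 1)) ^ b)
    (k : ℕ) : (2:ℝ) ^ ((k:ℝ)/2) * entropyNum W (2^k) ≤ B * ((k:ℝ)+1) ^ b := by
  have h1 := hW (2^k) Nat.one_le_two_pow
  have hpow : ((2^k : ℕ) : ℝ) = (2:ℝ) ^ (k:ℝ) := by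
    rw [Real.rpow_natCast]; push_cast; ring
  have hlog : Real.logb 2 (((2^k : ℕ) : ℝ) + 1) ≤ (k:ℝ) + 1 := by
    have hle : ((2^k : ℕ) : ℝ) + 1 ≤ (2:ℝ) ^ ((k:ℝ)+1) := by
      have : (2^k : ℕ) + 1 ≤ 2^(k+1) := by
        have : 1 ≤ 2^k := Nat.one_le_two_pow
        omega
      calc ((2^k : ℕ) : ℝ) + 1 ≤ ((2^(k+1) : ℕ) : ℝ) := by exact_mod_cast this
        _ = (2:ℝ) ^ ((k:ℝ)+1) := by
            rw [show ((k:ℝ)+1) = ((k+1 : ℕ) : ℝ) by push_cast; ring, Real.rpow_natCast]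
            push_cast; ring
    calc Real.logb 2 (((2^k : ℕ) : ℝ) + 1)
        ≤ Real.logb 2 ((2:ℝ) ^ ((k:ℝ)+1)) :=
          Real.logb_le_logb_of_le (by norm_num) (by positivity) hle
      _ = (k:ℝ)+1 := Real.logb_rpow (by norm_num) (by norm_num)
  have hlogb_nonneg : 0 ≤ Real.logb 2 (((2^k : ℕ) : ℝ) + 1) := by
    apply Real.logb_nonneg (by norm_num)
    have : (1:ℝ) ≤ ((2^k : ℕ) : ℝ) := by exact_mod_cast Nat.one_le_two_pow (n := k)
    linarith
  have hrp : Real.logb 2 (((2^k : ℕ) : ℝ) + 1) ^ b ≤ ((k:ℝ)+1) ^ b :=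
    Real.rpow_le_rpow hlogb_nonneg hlog hb
  have hcancel : (2:ℝ) ^ ((k:ℝ)/2) * ((2^k : ℕ) : ℝ) ^ (-(1:ℝ)/2) = 1 := by
    rw [hpow, ← Real.rpow_mul (by norm_num : (0:ℝ) ≤ 2),
      ← Real.rpow_add (by norm_num : (0:ℝ) < 2),
      show (k:ℝ)/2 + (k:ℝ) * (-(1:ℝ)/2) = 0 by ring, Real.rpow_zero]
  calc (2:ℝ) ^ ((k:ℝ)/2) * entropyNum W (2^k)
      ≤ (2:ℝ) ^ ((k:ℝ)/2) * (B * ((2^k : ℕ) : ℝ) ^ (-(1:ℝ)/2) * Real.logb 2 (((2^k:ℕ):ℝ) + 1) ^ b) := by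
        apply mul_le_mul_of_nonneg_left _ (by positivity)
        convert h1 using 3 <;> push_cast <;> ring
    _ = ((2:ℝ) ^ ((k:ℝ)/2) * ((2^k : ℕ) : ℝ) ^ (-(1:ℝ)/2)) * (B * Real.logb 2 (((2^k:ℕ):ℝ) + 1) ^ b) := by ring
    _ = B * Real.logb 2 (((2^k:ℕ):ℝ) + 1) ^ b := by rw [hcancel, one_mul]
    _ ≤ B * ((k:ℝ)+1) ^ b := by
        apply mul_le_mul_of_nonneg_left hrp hB.le

theorem stmt_3 {X : Type*} [SeminormedAddCommGroup X]
    (B M b : ℝ) (hB : 0 < B) (hM : 0 < M) (hb : 0 ≤ b) :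
    ∃ c : ℝ, 0 < c ∧ ∀ W : Set X,
      entropyNum W 0 ≤ M →
      (∀ n : ℕ, 1 ≤ n → entropyNum W n ≤ B * (n : ℝ) ^ (-(1:ℝ)/2) * (Real.logb 2 (n + 1)) ^ b) →
      ∀ m : ℕ, 2 ≤ m →
        ∑ k ∈ Finset.range (Nat.log 2 m + 1), (2 : ℝ) ^ ((k : ℝ) / 2) * entropyNum W (2 ^ k)
          ≤ c * (Real.logb 2 (m + 1)) ^ (b + 1) := by
  refine ⟨B * (2:ℝ) ^ (b+1), by positivity, ?_⟩
  intro W _ hW m hm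
  set L := Nat.log 2 m with hL
  have hsum : ∑ k ∈ Finset.range (L + 1), (2 : ℝ) ^ ((k : ℝ) / 2) * entropyNum W (2 ^ k)
      ≤ B * ((L:ℝ)+1) ^ (b+1) := by
    calc ∑ k ∈ Finset.range (L + 1), (2 : ℝ) ^ ((k : ℝ) / 2) * entropyNum W (2 ^ k)
        ≤ ∑ k ∈ Finset.range (L + 1), B * ((L:ℝ)+1) ^ b := by
          apply Finset.sum_le_sum
          intro k hk
          refine le_trans (term_bound_aux W hB hb hW k) ?_
          apply mul_le_mul_of_nonneg_left _ hB.le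
          apply Real.rpow_le_rpow (by positivity) _ hb
          have : k ≤ L := by simpa using Nat.lt_succ_iff.mp (Finset.mem_range.mp hk)
          have : (k:ℝ) ≤ (L:ℝ) := by exact_mod_cast this
          linarith
      _ = ((L:ℝ)+1) * (B * ((L:ℝ)+1) ^ b) := by
          rw [Finset.sum_const, Finset.card_range]; push_cast; ring
      _ = B * ((L:ℝ)+1) ^ (b+1) := by
          rw [Real.rpow_add (by positivity), Real.rpow_one]; ring
  have h1log : (1:ℝ) ≤ Real.logb 2 ((m:ℝ) + 1) := by
    have h2 : Real.logb 2 (2:ℝ) ≤ Real.logb 2 ((m:ℝ) + 1) := by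
      apply Real.logb_le_logb_of_le (by norm_num) (by norm_num)
      have : (2:ℝ) ≤ (m:ℝ) := by exact_mod_cast hm
      linarith
    rwa [Real.logb_self_eq_one (by norm_num)] at h2
  have hLlog : (L:ℝ) ≤ Real.logb 2 ((m:ℝ) + 1) := by
    have h2L : (2:ℕ)^L ≤ m := Nat.pow_log_le_self 2 (by omega)
    have : ((2:ℕ)^L : ℝ) ≤ (m:ℝ) := by exact_mod_cast h2L
    calc (L:ℝ) = Real.logb 2 ((2:ℝ)^(L:ℝ)) := (Real.logb_rpow (by norm_num) (by norm_num)).symm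
      _ ≤ Real.logb 2 ((m:ℝ)+1) := by
          apply Real.logb_le_logb_of_le (by norm_num) (by positivity)
          rw [Real.rpow_natCast]
          push_cast at this ⊢
          linarith
  have hkey : (L:ℝ) + 1 ≤ 2 * Real.logb 2 ((m:ℝ) + 1) := by linarith
  calc ∑ k ∈ Finset.range (L + 1), (2 : ℝ) ^ ((k : ℝ) / 2) * entropyNum W (2 ^ k)
      ≤ B * ((L:ℝ)+1) ^ (b+1) := hsum
    _ ≤ B * (2 * Real.logb 2 ((m:ℝ) + 1)) ^ (b+1) := by
        apply mul_le_mul_of_nonneg_left _ hB.le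
        exact Real.rpow_le_rpow (by positivity) hkey (by linarith)
    _ = B * (2:ℝ)^(b+1) * Real.logb 2 ((m:ℝ) + 1) ^ (b+1) := by
        rw [Real.mul_rpow (by norm_num) (by linarith)]; ring
end

section
/- Fix p ∈ [2, ∞), M > 0, and m points x_1,…,x_m. Let W be a set of functions with ‖f‖_∞ ≤ M for all f ∈ W. Then for any f, g ∈ W: (Σ_{j=1}^m ( |f(x_j)|^p − |g(x_j)|^p )²)^(1/2) ≤ 4p·M^((p−2)/2) · max_{1≤j≤m} |f(x_j) − g(x_j)| · sup_{h∈W} (Σ_{j=1}^m |h(x_j)|^p)^(1/2). -/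
/-!
Write `q = p / 2`, so that `a ^ p - b ^ p = (a ^ q - b ^ q) (a ^ q + b ^ q)`. By the mean value
theorem `|a ^ q - b ^ q| ≤ q M ^ (q - 1) |a - b|` on `[0, M]`, and `(a ^ q + b ^ q) ^ 2 ≤ 2 (a ^ p + b ^ p)`.
Summing over the points, each of `∑ |f (x j)| ^ p` and `∑ |g (x j)| ^ p` is at most the square of
the supremum over `W`, which gives the bound with the constant `p` in place of `4 p`.
-/

open Real Set

lemma abs_rpow_sub_rpow_le {q M a b : ℝ} (hq : 1 ≤ q) (ha : a ∈ Icc 0 M) (hb : b ∈ Icc 0 M) :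
    |a ^ q - b ^ q| ≤ q * M ^ (q - 1) * |a - b| := by
  refine (convex_Icc 0 M).norm_image_sub_le_of_norm_deriv_le
    (fun _ _ => (differentiable_rpow_const hq).differentiableAt) (fun t ht => ?_) hb ha
  rw [Real.deriv_rpow_const, norm_eq_abs, abs_of_nonneg (by have := ht.1; positivity)]
  gcongr
  exacts [ht.1, ht.2]

lemma sq_rpow_sub_rpow_le {p M a b : ℝ} (hp : 2 ≤ p) (ha : a ∈ Icc 0 M) (hb : b ∈ Icc 0 M) :
    (a ^ p - b ^ p) ^ 2 ≤ 2 * (p / 2 * M ^ ((p - 2) / 2) * |a - b|) ^ 2 * (a ^ p + b ^ p) := by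
  have hsq {t : ℝ} (ht : 0 ≤ t) : t ^ p = (t ^ (p / 2)) ^ 2 := by
    rw [← rpow_mul_natCast ht]; norm_num
  have hlip : |a ^ (p / 2) - b ^ (p / 2)| ≤ p / 2 * M ^ ((p - 2) / 2) * |a - b| := by
    have := abs_rpow_sub_rpow_le (q := p / 2) (by linarith) ha hb
    rwa [show p / 2 - 1 = (p - 2) / 2 by ring] at this
  rw [hsq ha.1, hsq hb.1]
  set A := a ^ (p / 2)
  set B := b ^ (p / 2)
  calc (A ^ 2 - B ^ 2) ^ 2 = (A - B) ^ 2 * (A + B) ^ 2 := by ring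
    _ ≤ (p / 2 * M ^ ((p - 2) / 2) * |a - b|) ^ 2 * (2 * (A ^ 2 + B ^ 2)) := by
      rw [← sq_abs (A - B)]
      gcongr
      exact add_sq_le
    _ = _ := by ring

lemma sum_sq_rpow_sub_rpow_le {ι : Type*} (s : Finset ι) {p M D : ℝ} (hp : 2 ≤ p) {a b : ι → ℝ}
    (ha : ∀ i ∈ s, a i ∈ Icc 0 M) (hb : ∀ i ∈ s, b i ∈ Icc 0 M) (hD : ∀ i ∈ s, |a i - b i| ≤ D) :
    ∑ i ∈ s, (a i ^ p - b i ^ p) ^ 2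
      ≤ 2 * (p / 2 * M ^ ((p - 2) / 2) * D) ^ 2 * (∑ i ∈ s, a i ^ p + ∑ i ∈ s, b i ^ p) := by
  rw [← Finset.sum_add_distrib, Finset.mul_sum]
  gcongr with i hi
  refine (sq_rpow_sub_rpow_le hp (ha i hi) (hb i hi)).trans ?_
  have ha0 := (ha i hi).1
  have hb0 := (hb i hi).1
  have hM0 : 0 ≤ M := ha0.trans (ha i hi).2
  gcongr
  exact hD i hi

lemma le_sq_iSup_sqrt {ι : Type*} {F : ι → ℝ} (hF : ∀ i, 0 ≤ F i) (hbdd : BddAbove (range F))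
    (i : ι) : F i ≤ (⨆ j, √(F j)) ^ 2 := by
  obtain ⟨C, hC⟩ := hbdd
  have hbdd' : BddAbove (range fun j => √(F j)) := by
    refine ⟨√C, ?_⟩
    rintro _ ⟨j, rfl⟩
    exact sqrt_le_sqrt (hC ⟨j, rfl⟩)
  rw [← sq_sqrt (hF i)]
  gcongr
  exact le_ciSup hbdd' i

lemma sum_rpow_le_sq_iSup_sqrt {Ω ι : Type*} [Fintype ι] {p M : ℝ} (hp : 0 ≤ p) (x : ι → Ω)
    {W : Set (Ω → ℝ)} (hW : ∀ f ∈ W, ∀ y, |f y| ≤ M) {h : Ω → ℝ} (hh : h ∈ W) :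
    ∑ j, |h (x j)| ^ p ≤ (⨆ h : W, √(∑ j, |(h : Ω → ℝ) (x j)| ^ p)) ^ 2 := by
  refine le_sq_iSup_sqrt (F := fun h : W => ∑ j, |(h : Ω → ℝ) (x j)| ^ p)
    (fun _ => by positivity) ⟨Fintype.card ι • M ^ p, ?_⟩ ⟨h, hh⟩
  rintro _ ⟨h', rfl⟩
  exact Finset.sum_le_card_nsmul _ _ _ fun j _ =>
    rpow_le_rpow (abs_nonneg _) (hW _ h'.2 _) hp

theorem stmt_8 {Ω : Type*} (p M : ℝ) (hp : 2 ≤ p) (hM : 0 < M) (m : ℕ) (x : Fin m → Ω)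
    (W : Set (Ω → ℝ)) (hW : ∀ f ∈ W, ∀ y : Ω, |f y| ≤ M)
    (f g : Ω → ℝ) (hf : f ∈ W) (hg : g ∈ W) :
    (∑ j, (|f (x j)| ^ p - |g (x j)| ^ p) ^ 2) ^ ((1:ℝ)/2)
      ≤ 4 * p * M ^ ((p - 2) / 2) * (⨆ j, |f (x j) - g (x j)|) *
        ⨆ h : W, (∑ j, |(h : Ω → ℝ) (x j)| ^ p) ^ ((1:ℝ)/2) := by
  simp only [← sqrt_eq_rpow]
  set D := ⨆ j, |f (x j) - g (x j)|
  set S := ⨆ h : W, √(∑ j, |(h : Ω → ℝ) (x j)| ^ p)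
  have hD0 : 0 ≤ D := iSup_nonneg fun _ => abs_nonneg _
  have hS0 : 0 ≤ S := iSup_nonneg fun _ => sqrt_nonneg _
  have hD : ∀ j ∈ Finset.univ, |(|f (x j)| - |g (x j)|)| ≤ D := fun j _ =>
    (abs_abs_sub_abs_le_abs_sub _ _).trans
      (le_ciSup (f := fun j => |f (x j) - g (x j)|) (finite_range _).bddAbove j)
  have hIcc : ∀ h ∈ W, ∀ j ∈ Finset.univ, |h (x j)| ∈ Icc 0 M := fun h hh j _ =>
    ⟨abs_nonneg _, hW h hh _⟩
  have hS : ∀ h ∈ W, ∑ j, |h (x j)| ^ p ≤ S ^ 2 := fun h hh =>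
    sum_rpow_le_sq_iSup_sqrt (by linarith) x hW hh
  rw [sqrt_le_left (by positivity)]
  calc ∑ j, (|f (x j)| ^ p - |g (x j)| ^ p) ^ 2
      ≤ 2 * (p / 2 * M ^ ((p - 2) / 2) * D) ^ 2 * (S ^ 2 + S ^ 2) :=
        (sum_sq_rpow_sub_rpow_le _ hp (hIcc f hf) (hIcc g hg) hD).trans
          (by gcongr; exacts [hS f hf, hS g hg])
    _ = (p * M ^ ((p - 2) / 2) * D * S) ^ 2 := by ring
    _ ≤ (4 * p * M ^ ((p - 2) / 2) * D * S) ^ 2 := by gcongr; linarith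
end

section
/- Let W be a subset of an m-dimensional normed space. Then for every k > k₀ ≥ 0, the dyadic entropy numbers satisfy e_k(W) ≤ 3·2^(2^{k₀}/m)·e_{k₀}(W)·2^(−2^k/m), where e_k(W) := ε_{2^k}(W) for k ≥ 1 and e_0(W) := ε_0(W). -/
open Real

/-- Dyadic entropy numbers: `e_k(W) = ε_{2^k}(W)` for `k ≥ 1` and `e_0(W) = ε_0(W)`. -/
noncomputable def dyadicEntropyNum {X : Type*} [SeminormedAddCommGroup X]
    (W : Set X) (k : ℕ) : ℝ :=
  if k = 0 then entropyNum W 0 else entropyNum W (2 ^ k)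


open Metric MeasureTheory Module

def entropySet {X : Type*} [SeminormedAddCommGroup X] (W : Set X) (n : ℕ) : Set ℝ :=
  {ε : ℝ | 0 < ε ∧ ∃ T : Finset X, ↑T ⊆ W ∧ T.card ≤ 2 ^ n ∧
    ∀ x ∈ W, ∃ y ∈ T, ‖x - y‖ ≤ ε}

lemma entropyNum_eq {X : Type*} [SeminormedAddCommGroup X] (W : Set X) (n : ℕ) :
    entropyNum W n = sInf (entropySet W n) := rfl

lemma entropySet_bddBelow {X : Type*} [SeminormedAddCommGroup X] (W : Set X) (n : ℕ) :
    BddBelow (entropySet W n) := ⟨0, fun ε hε => hε.1.le⟩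

lemma entropySet_nonempty {X : Type*} [SeminormedAddCommGroup X] {W : Set X}
    (hW : Bornology.IsBounded W) (n : ℕ) : (entropySet W n).Nonempty := by
  classical
  rcases W.eq_empty_or_nonempty with rfl | ⟨y₀, hy₀⟩
  · exact ⟨1, one_pos, ∅, by simp⟩
  · obtain ⟨r, hr⟩ := hW.subset_closedBall y₀
    refine ⟨max r 1, lt_of_lt_of_le one_pos (le_max_right _ _), {y₀}, by simpa using hy₀,
      by simpa using Nat.one_le_two_pow, ?_⟩
    intro x hx
    refine ⟨y₀, Finset.mem_singleton_self _, ?_⟩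
    have := hr hx
    rw [mem_closedBall, dist_eq_norm] at this
    exact this.trans (le_max_left _ _)

lemma entropySet_mono {X : Type*} [SeminormedAddCommGroup X] (W : Set X) {n n' : ℕ}
    (h : n ≤ n') : entropySet W n ⊆ entropySet W n' := by
  rintro ε ⟨h1, T, h2, h3, h4⟩
  exact ⟨h1, T, h2, h3.trans (Nat.pow_le_pow_right (by norm_num) h), h4⟩

lemma entropyNum_nonneg {X : Type*} [SeminormedAddCommGroup X] (W : Set X) (n : ℕ) :
    0 ≤ entropyNum W n :=
  Real.sInf_nonneg (fun ε hε => hε.1.le)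

lemma packing_bound {E : Type*} [NormedAddCommGroup E] [NormedSpace ℝ E]
    [MeasurableSpace E] [BorelSpace E] [FiniteDimensional ℝ E]
    {δ R : ℝ} (hδ : 0 < δ) (hR : 0 ≤ R) (c : E) (s : Finset E)
    (hs : ∀ x ∈ s, x ∈ closedBall c R)
    (hsep : ∀ x ∈ s, ∀ y ∈ s, x ≠ y → δ < dist x y) :
    (s.card : ℝ) * (δ / 2) ^ finrank ℝ E ≤ (R + δ / 2) ^ finrank ℝ E := by
  set μ := (Module.finBasis ℝ E).addHaar with hμ
  have hδ2 : (0:ℝ) ≤ δ / 2 := by positivity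
  have hdisj : (↑s : Set E).Pairwise (Function.onFun Disjoint fun x => closedBall x (δ / 2)) := by
    intro x hx y hy hxy
    exact closedBall_disjoint_closedBall (by linarith [hsep x hx y hy hxy])
  have hmeas : ∀ x ∈ s, MeasurableSet (closedBall x (δ / 2)) :=
    fun x _ => measurableSet_closedBall
  have hsum : ∑ x ∈ s, μ (closedBall x (δ / 2)) = μ (⋃ x ∈ s, closedBall x (δ / 2)) :=
    (measure_biUnion_finset hdisj hmeas).symm
  have hsub : (⋃ x ∈ s, closedBall x (δ / 2)) ⊆ closedBall c (R + δ / 2) := by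
    intro z hz
    simp only [Set.mem_iUnion] at hz
    obtain ⟨x, hx, hzx⟩ := hz
    have := hs x hx
    simp only [mem_closedBall] at *
    calc dist z c ≤ dist z x + dist x c := dist_triangle _ _ _
      _ ≤ δ / 2 + R := by gcongr
      _ = R + δ / 2 := by ring
  have hle : ∑ x ∈ s, μ (closedBall x (δ / 2)) ≤ μ (closedBall c (R + δ / 2)) :=
    hsum ▸ measure_mono hsub
  rw [Finset.sum_congr rfl (fun x _ => μ.addHaar_closedBall x hδ2),
    μ.addHaar_closedBall c (by linarith), Finset.sum_const, nsmul_eq_mul] at hle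
  have hK0 : μ (ball (0:E) 1) ≠ 0 := (measure_ball_pos μ 0 one_pos).ne'
  have hKt : μ (ball (0:E) 1) ≠ ⊤ := measure_ball_lt_top.ne
  rw [← mul_assoc] at hle
  have h2 : (s.card : ENNReal) * ENNReal.ofReal ((δ / 2) ^ finrank ℝ E)
      ≤ ENNReal.ofReal ((R + δ / 2) ^ finrank ℝ E) :=
    (ENNReal.mul_le_mul_iff_left hK0 hKt).1 hle
  rw [← ENNReal.ofReal_natCast, ← ENNReal.ofReal_mul (by positivity)] at h2
  exact (ENNReal.ofReal_le_ofReal_iff (by positivity)).1 h2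

lemma packing_bound_sub {X : Type*} [NormedAddCommGroup X] [NormedSpace ℝ X]
    (S : Submodule ℝ X) [FiniteDimensional ℝ S]
    {δ R : ℝ} (hδ : 0 < δ) (hR : 0 ≤ R) {c : X} (hc : c ∈ S) (s : Finset X)
    (hsS : ∀ x ∈ s, x ∈ S) (hs : ∀ x ∈ s, dist x c ≤ R)
    (hsep : ∀ x ∈ s, ∀ y ∈ s, x ≠ y → δ < dist x y) :
    (s.card : ℝ) * (δ / 2) ^ finrank ℝ S ≤ (R + δ / 2) ^ finrank ℝ S := by
  borelize ↥S
  classical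
  set f : (x : X) → x ∈ s → S := fun x hx => (⟨x, hsS x hx⟩ : S) with hf
  have hinj : ∀ (x : X) (hx : x ∈ s) (y : X) (hy : y ∈ s), f x hx = f y hy → x = y := by
    intro x hx y hy h
    exact congrArg Subtype.val h
  set s' : Finset S := s.attach.image (fun x => f x.1 x.2) with hs'
  have hcard : s'.card = s.card := by
    rw [hs', Finset.card_image_of_injective _ (fun a b hab =>
      Subtype.ext (hinj a.1 a.2 b.1 b.2 hab)), Finset.card_attach]
  have hdistS : ∀ a b : S, dist a b = dist (a : X) (b : X) := fun a b => rfl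
  have := packing_bound (E := S) hδ hR ⟨c, hc⟩ s' ?_ ?_
  · rwa [hcard] at this
  · intro x hx
    rw [hs', Finset.mem_image] at hx
    obtain ⟨a, _, rfl⟩ := hx
    exact hs a.1 a.2
  · intro x hx y hy hxy
    rw [hs', Finset.mem_image] at hx hy
    obtain ⟨a, _, rfl⟩ := hx
    obtain ⟨b, _, rfl⟩ := hy
    exact hsep a.1 a.2 b.1 b.2 (fun h => hxy (by simp [hf, h]))

lemma exists_net {X : Type*} [NormedAddCommGroup X] (A : Set X) {δ : ℝ} (hδ : 0 < δ) {N : ℕ}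
    (hbound : ∀ s : Finset X, ↑s ⊆ A → (∀ x ∈ s, ∀ y ∈ s, x ≠ y → δ < dist x y) → s.card ≤ N) :
    ∃ T : Finset X, ↑T ⊆ A ∧ T.card ≤ N ∧ ∀ x ∈ A, ∃ y ∈ T, dist x y ≤ δ := by
  classical
  set P : ℕ → Prop := fun n => ∃ s : Finset X, ↑s ⊆ A ∧
    (∀ x ∈ s, ∀ y ∈ s, x ≠ y → δ < dist x y) ∧ s.card = n with hP
  have h0 : P 0 := ⟨∅, by simp⟩
  have hbdd : BddAbove {n | P n} := by
    refine ⟨N, fun n hn => ?_⟩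
    obtain ⟨s, h1, h2, h3⟩ := hn
    exact h3 ▸ hbound s h1 h2
  have hmem : P (sSup {n | P n}) := Nat.sSup_mem ⟨0, h0⟩ hbdd
  obtain ⟨T, hTA, hTsep, hTcard⟩ := hmem
  refine ⟨T, hTA, hTcard ▸ hbound T hTA hTsep, ?_⟩
  intro x hx
  by_contra hcon
  push_neg at hcon
  have hxT : x ∉ T := by
    intro h
    have := hcon x h
    simp only [dist_self] at this
    linarith
  have : P (sSup {n | P n} + 1) := by
    refine ⟨insert x T, ?_, ?_, by rw [Finset.card_insert_of_notMem hxT, hTcard]⟩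
    · intro z hz
      rcases Finset.mem_insert.1 hz with rfl | hz
      · exact hx
      · exact hTA hz
    · intro a ha b hb hab
      rcases Finset.mem_insert.1 ha with ha' | ha' <;>
        rcases Finset.mem_insert.1 hb with hb' | hb'
      · exact absurd (ha'.trans hb'.symm) hab
      · subst ha'; exact hcon b hb'
      · subst hb'; rw [dist_comm]; exact hcon a ha'
      · exact hTsep a ha' b hb' hab
  have := le_csSup hbdd this
  omega

lemma covering_step {X : Type*} [NormedAddCommGroup X] [NormedSpace ℝ X] {m : ℕ} (hm : 1 ≤ m)
    (S : Submodule ℝ X) [FiniteDimensional ℝ S] (hdim : finrank ℝ S = m)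
    (W : Set X) (hWS : W ⊆ (S : Set X))
    {ρ ε : ℝ} (hρ : 0 < ρ) {n₀ n₁ : ℕ}
    (hcount : (2:ℝ) ^ n₀ * (2 / ρ + 1) ^ m ≤ (2:ℝ) ^ n₁)
    (hε : ε ∈ entropySet W n₀) : ρ * ε ∈ entropySet W n₁ := by
  classical
  obtain ⟨hε0, T₀, hT₀W, hT₀card, hT₀cov⟩ := hε
  set N : ℕ := ⌊(2 / ρ + 1) ^ m⌋₊ with hN
  have hδ : (0:ℝ) < ρ * ε := by positivity
  have hnet : ∀ y : X, ∃ Ty : Finset X, y ∈ T₀ →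
      ↑Ty ⊆ W ∩ closedBall y ε ∧ Ty.card ≤ N ∧
      ∀ x ∈ W ∩ closedBall y ε, ∃ t ∈ Ty, dist x t ≤ ρ * ε := by
    intro y
    by_cases hy : y ∈ T₀
    · have hyS : y ∈ S := hWS (hT₀W hy)
      have hbound : ∀ s : Finset X, ↑s ⊆ W ∩ closedBall y ε →
          (∀ x ∈ s, ∀ x' ∈ s, x ≠ x' → ρ * ε < dist x x') → s.card ≤ N := by
        intro s hsA hssep
        have hsS : ∀ x ∈ s, x ∈ S := fun x hx => hWS (hsA hx).1
        have hsB : ∀ x ∈ s, dist x y ≤ ε := fun x hx => (hsA hx).2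
        have hpk := packing_bound_sub S hδ hε0.le hyS s hsS hsB hssep
        rw [hdim] at hpk
        have hb : (0:ℝ) < (ρ * ε / 2) ^ m := by positivity
        have h1 : (s.card : ℝ) ≤ (ε + ρ * ε / 2) ^ m / (ρ * ε / 2) ^ m :=
          (le_div_iff₀ hb).2 hpk
        rw [← div_pow] at h1
        have h2 : (ε + ρ * ε / 2) / (ρ * ε / 2) = 2 / ρ + 1 := by
          field_simp
        rw [h2] at h1
        exact Nat.le_floor h1
      obtain ⟨Ty, h1, h2, h3⟩ := exists_net (W ∩ closedBall y ε) hδ hbound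
      exact ⟨Ty, fun _ => ⟨h1, h2, h3⟩⟩
    · exact ⟨∅, fun h => absurd h hy⟩
  choose f hf using hnet
  refine ⟨hδ, T₀.biUnion f, ?_, ?_, ?_⟩
  · intro t ht
    simp only [Finset.coe_biUnion, Set.mem_iUnion, Finset.mem_coe] at ht
    obtain ⟨y, hy, hty⟩ := ht
    exact ((hf y hy).1 hty).1
  · calc (T₀.biUnion f).card ≤ ∑ y ∈ T₀, (f y).card := Finset.card_biUnion_le
      _ ≤ T₀.card * N := by
          rw [← smul_eq_mul]
          exact Finset.sum_le_card_nsmul _ _ N (fun y hy => (hf y hy).2.1)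
      _ ≤ 2 ^ n₀ * N := by gcongr
      _ ≤ 2 ^ n₁ := by
          have hfl : (N : ℝ) ≤ (2 / ρ + 1) ^ m := Nat.floor_le (by positivity)
          have : ((2 ^ n₀ * N : ℕ) : ℝ) ≤ ((2 ^ n₁ : ℕ) : ℝ) := by
            push_cast
            calc (2:ℝ) ^ n₀ * N ≤ (2:ℝ) ^ n₀ * (2 / ρ + 1) ^ m := by
                  gcongr
              _ ≤ (2:ℝ) ^ n₁ := hcount
          exact_mod_cast this
  · intro x hx
    obtain ⟨y, hy, hxy⟩ := hT₀cov x hx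
    have hxA : x ∈ W ∩ closedBall y ε := ⟨hx, by rwa [mem_closedBall, dist_eq_norm]⟩
    obtain ⟨t, ht, hdt⟩ := (hf y hy).2.2 x hxA
    exact ⟨t, Finset.mem_biUnion.2 ⟨y, hy, ht⟩, by rwa [← dist_eq_norm]⟩

theorem stmt_17 {X : Type*} [NormedAddCommGroup X] [NormedSpace ℝ X]
    (m : ℕ) (hm : 1 ≤ m) (S : Submodule ℝ X) (hdim : Module.finrank ℝ S = m)
    (W : Set X) (hWS : W ⊆ (S : Set X)) (hWbdd : Bornology.IsBounded W) :
    ∀ k₀ k : ℕ, k₀ < k →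
      dyadicEntropyNum W k
        ≤ 3 * (2 : ℝ) ^ ((2 : ℝ) ^ k₀ / m) * dyadicEntropyNum W k₀ *
          (2 : ℝ) ^ (-((2 : ℝ) ^ k) / m) := by
  intro k₀ k hk
  classical
  haveI : FiniteDimensional ℝ S := FiniteDimensional.of_finrank_pos (by omega : 0 < finrank ℝ S)
  have hmR : (0:ℝ) < (m:ℝ) := by exact_mod_cast hm
  set n₀ : ℕ := if k₀ = 0 then 0 else 2 ^ k₀ with hn₀
  have hL : dyadicEntropyNum W k = entropyNum W (2 ^ k) := if_neg (by omega)
  have hL₀ : dyadicEntropyNum W k₀ = entropyNum W n₀ := by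
    rw [dyadicEntropyNum, hn₀]; split_ifs <;> rfl
  have hn₀le : n₀ ≤ 2 ^ k₀ := by rw [hn₀]; split_ifs <;> simp
  set D : ℝ := (2:ℝ) ^ k - (2:ℝ) ^ k₀ with hD
  have h2k : (2:ℝ) ^ k₀ * 2 ≤ (2:ℝ) ^ k := by
    calc (2:ℝ) ^ k₀ * 2 = 2 ^ (k₀ + 1) := by ring
    _ ≤ (2:ℝ) ^ k := by
        apply pow_le_pow_right₀ one_le_two
        omega
  have h2k₀pos : (0:ℝ) < (2:ℝ) ^ k₀ := by positivity
  have hDpos : 0 < D := by rw [hD]; nlinarith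
  set ρ : ℝ := 3 * (2:ℝ) ^ (-D / (m:ℝ)) with hρ
  have hρpos : 0 < ρ := by positivity
  have hRHS : 3 * (2:ℝ) ^ ((2:ℝ) ^ k₀ / (m:ℝ)) * dyadicEntropyNum W k₀ *
      (2:ℝ) ^ (-((2:ℝ) ^ k) / (m:ℝ)) = ρ * entropyNum W n₀ := by
    rw [hL₀, hρ, show (-D / (m:ℝ)) = (2:ℝ) ^ k₀ / m + -((2:ℝ) ^ k) / m by rw [hD]; ring,
      Real.rpow_add two_pos]
    ring
  rw [hL, hRHS]
  have he₀ : 0 ≤ entropyNum W n₀ := entropyNum_nonneg W n₀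
  rcases le_or_gt 1 ρ with hρ1 | hρ1
  · -- easy case: monotonicity
    have hmono : entropyNum W (2 ^ k) ≤ entropyNum W n₀ := by
      rw [entropyNum_eq, entropyNum_eq]
      apply csInf_le_csInf (entropySet_bddBelow W _) (entropySet_nonempty hWbdd _)
      apply entropySet_mono
      calc n₀ ≤ 2 ^ k₀ := hn₀le
        _ ≤ 2 ^ k := Nat.pow_le_pow_right (by norm_num) hk.le
    calc entropyNum W (2 ^ k) ≤ entropyNum W n₀ := hmono
      _ ≤ ρ * entropyNum W n₀ := le_mul_of_one_le_left he₀ hρ1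
  · -- main case
    have h3 : (3:ℝ) ≤ (2:ℝ) ^ (D / (m:ℝ)) := by
      have h1 : (2:ℝ) ^ (-D / (m:ℝ)) = ((2:ℝ) ^ (D / (m:ℝ)))⁻¹ := by
        rw [← Real.rpow_neg (by norm_num)]
        ring_nf
      have hp : (0:ℝ) < (2:ℝ) ^ (D / (m:ℝ)) := Real.rpow_pos_of_pos two_pos _
      rw [hρ, h1] at hρ1
      rw [mul_inv_lt_iff₀ hp, one_mul] at hρ1
      exact hρ1.le
    have hcount : (2:ℝ) ^ n₀ * (2 / ρ + 1) ^ m ≤ (2:ℝ) ^ (2 ^ k : ℕ) := by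
      have hp : (0:ℝ) < (2:ℝ) ^ (D / (m:ℝ)) := Real.rpow_pos_of_pos two_pos _
      have hinv : (2:ℝ) ^ (-D / (m:ℝ)) = ((2:ℝ) ^ (D / (m:ℝ)))⁻¹ := by
        rw [← Real.rpow_neg (by norm_num)]; ring_nf
      have hbase : 2 / ρ + 1 ≤ (2:ℝ) ^ (D / (m:ℝ)) := by
        have he : 2 / ρ = 2 * (2:ℝ) ^ (D / (m:ℝ)) / 3 := by
          rw [hρ, hinv]
          field_simp
        rw [he]
        linarith
      have hpow : ((2:ℝ) ^ (D / (m:ℝ))) ^ m = (2:ℝ) ^ D := by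
        rw [← Real.rpow_natCast ((2:ℝ) ^ (D / (m:ℝ))) m, ← Real.rpow_mul (by norm_num)]
        congr 1
        field_simp
      have h1 : (2 / ρ + 1) ^ m ≤ (2:ℝ) ^ D := by
        rw [← hpow]
        apply pow_le_pow_left₀ (by positivity) hbase
      have h2 : (2:ℝ) ^ n₀ = (2:ℝ) ^ ((n₀ : ℝ)) := by
        rw [Real.rpow_natCast]
      calc (2:ℝ) ^ n₀ * (2 / ρ + 1) ^ m ≤ (2:ℝ) ^ ((n₀:ℝ)) * (2:ℝ) ^ D := by
            rw [← h2]; gcongr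
        _ = (2:ℝ) ^ ((n₀:ℝ) + D) := (Real.rpow_add two_pos _ _).symm
        _ ≤ (2:ℝ) ^ (((2:ℕ) ^ k : ℕ) : ℝ) := by
            apply Real.rpow_le_rpow_of_exponent_le one_le_two
            have : (n₀ : ℝ) ≤ (2:ℝ) ^ k₀ := by
              calc (n₀:ℝ) ≤ ((2 ^ k₀ : ℕ) : ℝ) := by exact_mod_cast hn₀le
                _ = (2:ℝ) ^ k₀ := by push_cast; ring
            rw [hD] at *
            push_cast
            linarith
        _ = (2:ℝ) ^ ((2:ℕ) ^ k : ℕ) := by rw [Real.rpow_natCast]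
    have hkey : ∀ ε ∈ entropySet W n₀, entropyNum W (2 ^ k) ≤ ρ * ε := by
      intro ε hε
      rw [entropyNum_eq]
      exact csInf_le (entropySet_bddBelow W _)
        (covering_step hm S hdim W hWS hρpos hcount hε)
    have hdiv : entropyNum W (2 ^ k) / ρ ≤ entropyNum W n₀ := by
      rw [entropyNum_eq W n₀]
      apply le_csInf (entropySet_nonempty hWbdd _)
      intro ε hε
      rw [div_le_iff₀ hρpos]
      rw [mul_comm]
      exact hkey ε hε
    rw [div_le_iff₀ hρpos] at hdiv
    linarith [hdiv]
end
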